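/- Let K be ℚ(i) or ℚ(√−3) and let w ∈ F be such that α := w⁴ lies in K. Then α or −α is a square in K. Moreover, if K = ℚ(i), then α is a square in K. (That is: if the square root of an element α of K is a square in F, then ±α is a square in K, and α itself is a square in K when K = ℚ(i).) -/

import Mathlib

open IntermediateField

/-- `ℚ(i)`, realized as a subfield of `ℂ`. -/
noncomputable def QI : IntermediateField ℚ ℂ := ℚ⟮(Complex.I : ℂ)⟯

/-- `ℚ(√−3)`, realized as a subfield of `ℂ`. -/
noncomputable def Qm3 : IntermediateField ℚ ℂ := ℚ⟮(Complex.I * Real.sqrt 3 : ℂ)⟯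

/-- The maximal elementary abelian 2-extension of `K` inside an algebraic closure, i.e.
the subfield generated over `K` by the square roots of all elements of `K`. -/
noncomputable def F (K : IntermediateField ℚ ℂ) : IntermediateField K ℂ :=
  IntermediateField.adjoin K {x : ℂ | ∃ a : K, x ^ 2 = (a : ℂ)}

/-!
Put `M = K(i)`. An element of `F` lies in a tower `M = L₀ ⊆ L₁ ⊆ ⋯ ⊆ Lₙ` with
`Lₖ₊₁ = Lₖ(r)`, `r² ∈ K`, and by induction up the tower `z⁴ ∈ M` forces `z² ∈ M`: writing
`z = x + y r` with `x, y ∈ Lₖ` and `r ∉ Lₖ`, the `r`-coordinate `4xy(x² + y²r²)` of `z⁴` vanishes,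
and `x² + y²r² = 0` with `y ≠ 0` would put `r = ±ix/y` in `Lₖ`. Hence `w² = x + yi` with
`x, y ∈ K`, so `α = (x + yi)²`; if `i ∉ K`, comparing `i`-coordinates gives `xy = 0`, that is
`α = x²` or `α = -y²`.
-/

open Polynomial

section
variable {K E : Type*} [Field K] [Field E] [Algebra K E]

theorem exists_eq_add_mul_of_mem_adjoin_simple {r : E} (hr : r ^ 2 ∈ (⊥ : IntermediateField K E))
    {z : E} (hz : z ∈ K⟮r⟯) : ∃ x y : K, z = algebraMap K E x + algebraMap K E y * r := by
  obtain ⟨a, ha⟩ := mem_bot.1 hr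
  set q : K[X] := X ^ 2 - C a
  have hq : q.Monic := monic_X_pow_sub_C a two_ne_zero
  have hqr : aeval r q = 0 := by simp [q, ha]
  rw [← mem_toSubalgebra, adjoin_simple_toSubalgebra_of_isAlgebraic ⟨q, hq.ne_zero, hqr⟩,
    Algebra.adjoin_singleton_eq_range_aeval] at hz
  obtain ⟨f, rfl⟩ := hz
  have hdeg : (f %ₘ q).natDegree ≤ 1 := by
    have hq2 : q.natDegree = 2 := natDegree_X_pow_sub_C
    have := natDegree_modByMonic_lt f hq (fun h => by simp [h] at hq2)
    omega
  refine ⟨(f %ₘ q).coeff 0, (f %ₘ q).coeff 1, ?_⟩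
  rw [AlgHom.toRingHom_eq_coe, RingHom.coe_coe, ← aeval_modByMonic_eq_self_of_root hqr,
    eq_X_add_C_of_natDegree_le_one hdeg]
  simp [add_comm]

theorem eq_zero_of_add_mul_mem_bot {r : E} (hr : r ∉ (⊥ : IntermediateField K E)) {x y : K}
    (h : algebraMap K E x + algebraMap K E y * r ∈ (⊥ : IntermediateField K E)) : y = 0 := by
  by_contra hy
  have hy' : algebraMap K E y ≠ 0 := (_root_.map_ne_zero _).2 hy
  refine hr ?_
  have hr_eq : r = (algebraMap K E y)⁻¹ *
      ((algebraMap K E x + algebraMap K E y * r) - algebraMap K E x) := by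
    field_simp; ring
  rw [hr_eq]
  exact mul_mem (inv_mem (IntermediateField.algebraMap_mem _ y))
    (sub_mem h (IntermediateField.algebraMap_mem _ x))

theorem mem_bot_of_sq_add_sq_mul_sq_eq_zero (i : K) (hi : i ^ 2 = -1) {x y : K} (hy : y ≠ 0)
    {r : E} (h : algebraMap K E x ^ 2 + algebraMap K E y ^ 2 * r ^ 2 = 0) :
    r ∈ (⊥ : IntermediateField K E) := by
  have hy' : algebraMap K E y ≠ 0 := (_root_.map_ne_zero _).2 hy
  have hr : r ^ 2 = algebraMap K E (i * x / y) ^ 2 := by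
    rw [map_div₀, map_mul, div_pow, mul_pow, ← map_pow _ i, hi, map_neg, map_one]
    field_simp
    linear_combination h
  rcases sq_eq_sq_iff_eq_or_eq_neg.1 hr with h | h <;> rw [h]
  · exact IntermediateField.algebraMap_mem _ _
  · exact neg_mem (IntermediateField.algebraMap_mem _ _)

theorem eq_sq_or_neg_eq_sq_of_algebraMap_eq_sq {i : E} (hi : i ^ 2 = -1)
    (hiK : i ∉ (⊥ : IntermediateField K E)) (h2 : (2 : K) ≠ 0) {a x y : K}
    (h : algebraMap K E a = (algebraMap K E x + algebraMap K E y * i) ^ 2) :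
    (∃ b : K, a = b ^ 2) ∨ ∃ b : K, -a = b ^ 2 := by
  have hexpand : (algebraMap K E x + algebraMap K E y * i) ^ 2 =
      algebraMap K E (x ^ 2 - y ^ 2) + algebraMap K E (2 * x * y) * i := by
    simp only [map_sub, map_mul, map_pow, map_ofNat]
    linear_combination (algebraMap K E y) ^ 2 * hi
  have hxy : 2 * x * y = 0 :=
    eq_zero_of_add_mul_mem_bot hiK (hexpand ▸ h ▸ IntermediateField.algebraMap_mem _ a)
  have ha : a = x ^ 2 - y ^ 2 := by
    rw [hexpand, hxy, map_zero, zero_mul, add_zero] at h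
    exact (algebraMap K E).injective h
  rcases mul_eq_zero.1 hxy with hx | rfl
  · obtain rfl : x = 0 := by simpa [h2] using hx
    exact Or.inr ⟨y, by rw [ha]; ring⟩
  · exact Or.inl ⟨x, by rw [ha]; ring⟩

end

section
variable {M E : Type*} [Field M] [Field E] [Algebra M E]

theorem sq_mem_bot_of_mem_adjoin_simple (i : M) (hi : i ^ 2 = -1) (h2 : (2 : E) ≠ 0)
    {L : IntermediateField M E}
    (hL : ∀ z ∈ L, z ^ 4 ∈ (⊥ : IntermediateField M E) → z ^ 2 ∈ (⊥ : IntermediateField M E))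
    {r : E} (hr : r ^ 2 ∈ (⊥ : IntermediateField M E)) {z : E} (hz : z ∈ L⟮r⟯)
    (hz4 : z ^ 4 ∈ (⊥ : IntermediateField M E)) : z ^ 2 ∈ (⊥ : IntermediateField M E) := by
  have hML : (⊥ : IntermediateField M E) ≤ L := bot_le
  set s : L := ⟨r ^ 2, hML hr⟩
  have hs : algebraMap L E s = r ^ 2 := rfl
  obtain ⟨x, y, rfl⟩ := exists_eq_add_mul_of_mem_adjoin_simple (mem_bot.2 ⟨s, hs⟩) hz
  by_cases hrL : r ∈ (⊥ : IntermediateField L E)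
  · obtain ⟨c, rfl⟩ := hrL
    exact hL _ (by simpa using (x + y * c).2) hz4
  rcases eq_or_ne y 0 with rfl | hy
  · simpa using hL _ x.2 (by simpa using hz4)
  have hexpand : (algebraMap L E x + algebraMap L E y * r) ^ 4 =
      algebraMap L E (x ^ 4 + 6 * x ^ 2 * y ^ 2 * s + y ^ 4 * s ^ 2)
      + algebraMap L E (4 * x * y * (x ^ 2 + y ^ 2 * s)) * r := by
    simp only [map_add, map_mul, map_pow, map_ofNat, hs]; ring
  have hz4L : (algebraMap L E x + algebraMap L E y * r) ^ 4 ∈ (⊥ : IntermediateField L E) :=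
    mem_bot.2 ⟨⟨_, hML hz4⟩, rfl⟩
  have hcross : 4 * x * y * (x ^ 2 + y ^ 2 * s) = 0 :=
    eq_zero_of_add_mul_mem_bot hrL (hexpand ▸ hz4L)
  have h4 : (4 : L) ≠ 0 := by
    have h2L : (2 : L) ≠ 0 := fun h => h2 (by rw [← map_ofNat (algebraMap L E) 2, h, map_zero])
    rw [show (4 : L) = 2 * 2 by norm_num]
    exact mul_ne_zero h2L h2L
  rcases mul_eq_zero.1 hcross with hxy | hsum
  · obtain rfl : x = 0 := by simpa [h4, hy] using hxy
    rw [map_zero, zero_add] at hz4 ⊢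
    have hr0 : r ≠ 0 := fun h => hrL (h ▸ zero_mem _)
    have hy4 : algebraMap L E y ^ 4 ∈ (⊥ : IntermediateField M E) := by
      rw [show algebraMap L E y ^ 4 = (algebraMap L E y * r) ^ 4 / (r ^ 2) ^ 2 by field_simp]
      exact div_mem hz4 (pow_mem hr 2)
    simpa [mul_pow] using mul_mem (hL _ y.2 hy4) hr
  · refine absurd (mem_bot_of_sq_add_sq_mul_sq_eq_zero (algebraMap M L i) ?_ (x := x) hy ?_) hrL
    · rw [← map_pow, hi, map_neg, map_one]
    · simpa [hs] using congrArg (algebraMap L E) hsum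

theorem sq_mem_bot_of_mem_adjoin_sqrts (i : M) (hi : i ^ 2 = -1) (h2 : (2 : E) ≠ 0) {S : Set E}
    (hS : ∀ s ∈ S, s ^ 2 ∈ (⊥ : IntermediateField M E)) {z : E} (hz : z ∈ adjoin M S)
    (hz4 : z ^ 4 ∈ (⊥ : IntermediateField M E)) : z ^ 2 ∈ (⊥ : IntermediateField M E) := by
  classical
  obtain ⟨T, hTS, hzT⟩ := exists_finset_of_mem_adjoin hz
  clear hz
  induction T using Finset.induction_on generalizing z with
  | empty =>
    rw [Finset.coe_empty, adjoin_empty] at hzT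
    exact pow_mem hzT 2
  | insert r T _ ih =>
    rw [Finset.coe_insert, Set.insert_subset_iff] at hTS
    rw [Finset.coe_insert, Set.insert_eq, Set.union_comm, ← adjoin_adjoin_left,
      mem_restrictScalars] at hzT
    exact sq_mem_bot_of_mem_adjoin_simple i hi h2 (fun x hx hx4 => ih hx4 hTS.2 hx)
      (hS r hTS.1) hzT hz4

end

theorem exists_sq_eq_add_mul_I_of_mem_F (K : IntermediateField ℚ ℂ) {w : ℂ} (hw : w ∈ F K)
    (hw4 : w ^ 4 ∈ K) : ∃ x y : K, w ^ 2 = x + y * Complex.I := by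
  set M : IntermediateField K ℂ := K⟮Complex.I⟯
  have hIM : Complex.I ∈ M := mem_adjoin_simple_self K Complex.I
  have hKM (a : K) : (a : ℂ) ∈ (⊥ : IntermediateField M ℂ) :=
    mem_bot.2 ⟨⟨a, M.algebraMap_mem a⟩, rfl⟩
  have hwM : w ∈ adjoin M {x : ℂ | ∃ a : K, x ^ 2 = (a : ℂ)} :=
    (adjoin_le_iff.2 (subset_adjoin M _) : F K ≤ (adjoin M _).restrictScalars K) hw
  have hw2 := sq_mem_bot_of_mem_adjoin_sqrts (⟨Complex.I, hIM⟩ : M) (Subtype.ext (by simp))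
    two_ne_zero (by rintro s ⟨a, ha⟩; exact ha ▸ hKM a) hwM (hKM ⟨w ^ 4, hw4⟩)
  obtain ⟨⟨v, hv⟩, hvw⟩ := mem_bot.1 hw2
  obtain ⟨x, y, hxy⟩ := exists_eq_add_mul_of_mem_adjoin_simple
    (mem_bot.2 ⟨-1, by simp⟩ : Complex.I ^ 2 ∈ (⊥ : IntermediateField K ℂ)) hv
  exact ⟨x, y, hvw ▸ hxy⟩

theorem I_notMem_Qm3 : Complex.I ∉ Qm3 := by
  intro hI
  have hθ : (Complex.I * √3) ^ 2 ∈ (⊥ : IntermediateField ℚ ℂ) :=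
    mem_bot.2 ⟨-3, by
      rw [mul_pow, Complex.I_sq, ← Complex.ofReal_pow, Real.sq_sqrt (by norm_num)]; simp⟩
  obtain ⟨p, q, hpq⟩ := exists_eq_add_mul_of_mem_adjoin_simple hθ hI
  have him : (1 : ℝ) = q * √3 := by simpa using congrArg Complex.im hpq
  have hq : q ≠ 0 := by rintro rfl; simp at him
  have h3 : Irrational √3 := by norm_num
  exact (h3.ratCast_mul hq).ne_one him.symm

theorem sqrt_is_square_in_F :
    (∀ (K : IntermediateField ℚ ℂ), K = QI ∨ K = Qm3 →
      ∀ (α : K) (w : F K), w ^ 4 = algebraMap K (F K) α →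
        (∃ b : K, α = b ^ 2) ∨ (∃ b : K, -α = b ^ 2)) ∧
    (∀ (α : QI) (w : F QI), w ^ 4 = algebraMap QI (F QI) α → ∃ b : QI, α = b ^ 2) := by
  have hcoe {K : IntermediateField ℚ ℂ} {α : K} {w : F K} (hw : w ^ 4 = algebraMap K (F K) α) :
      (w : ℂ) ^ 4 = α := by
    simpa using congrArg (fun z : F K => (z : ℂ)) hw
  have hQI (α : QI) (w : F QI) (hw : w ^ 4 = algebraMap QI (F QI) α) : ∃ b : QI, α = b ^ 2 := by
    obtain ⟨x, y, hxy⟩ := exists_sq_eq_add_mul_I_of_mem_F QI w.2 (hcoe hw ▸ α.2)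
    refine ⟨x + y * ⟨Complex.I, mem_adjoin_simple_self ℚ Complex.I⟩, Subtype.ext ?_⟩
    push_cast
    rw [← hcoe hw, ← hxy]
    ring
  refine ⟨fun K hK α w hw => ?_, hQI⟩
  rcases hK with rfl | rfl
  · exact Or.inl (hQI α w hw)
  · obtain ⟨x, y, hxy⟩ := exists_sq_eq_add_mul_I_of_mem_F Qm3 w.2 (hcoe hw ▸ α.2)
    refine eq_sq_or_neg_eq_sq_of_algebraMap_eq_sq Complex.I_sq ?_ two_ne_zero
      (show (α : ℂ) = (x + y * Complex.I) ^ 2 by rw [← hcoe hw, ← hxy]; ring)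
    rintro ⟨c, hc⟩
    exact I_notMem_Qm3 (hc ▸ c.2)
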